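/- arXiv:2005.01894 — 2 statements merged into one kernel-verified Lean document; each statement's English description precedes it below -/
import Mathlib

section
/- Every polynomial comonad is a category (one direction of the Ahman–Uustalu theorem): let P be a polynomial functor whose associated functor carries a comonad structure, i.e. natural transformations ε to the identity functor and δ to the composite of the associated functor with itself, satisfying the counit laws and coassociativity. Then there exists a category structure on the type P.A together with, for each a : P.A, a bijection φ_a : P.B a ≃ Σ (b : P.A), (a ⟶ b) such that, writing cod d and arr d for the two components of φ_a d (so arr d : a ⟶ cod d), for every type X and every element (a, k) of the associated functor at X one has ε_X (a, k) = k (φ_a⁻¹ (a, 𝟙 a)) and δ_X (a, k) = (a, fun d ↦ (cod d, fun d' ↦ k (φ_a⁻¹ (cod d', arr d ≫ arr d')))). -/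
open CategoryTheory

universe u

/-- The associated functor `Type u ⥤ Type u` of a polynomial functor. -/
def PFunctor.toFunctor (P : PFunctor.{u}) : Type u ⥤ Type u where
  obj X := P.Obj X
  map f := TypeCat.ofHom (fun x => P.map f x)
  map_id := by intro X; apply ConcreteCategory.hom_ext; intro x; exact P.id_map x
  map_comp := by intro X Y Z f g; apply ConcreteCategory.hom_ext; intro x; exact (P.map_map f g x).symm

/-!
By naturality, `ε` and `δ` are determined by their values at the generic elements
`⟨a, id⟩ : P.Obj (P.B a)`: a direction `root a : P.B a`, and for each `d : P.B a` a position
`a ↓ d` together with a map `P.B (a ↓ d) → P.B a`. The counit laws and coassociativity become the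
laws of a directed container, and a directed container is a category whose arrows out of `a`
are the directions at `a`, with codomain `a ↓ d`, identity `root a` and composition given by that
map.
-/

namespace PFunctor

variable {P : PFunctor.{u}}

/-- In Ahman–Uustalu's notation `step a d = ⟨a ↓ d, fun d' => d ⊕ d'⟩`. Bundling the position and
the extension map into one element of `P.Obj (P.B a)` turns the dependently typed laws into plain
equations. -/
structure DirectedContainer (P : PFunctor.{u}) where
  step : ∀ a, P.B a → P.Obj (P.B a)
  root : ∀ a, P.B a
  step_root : ∀ a, step a (root a) = ⟨a, id⟩
  snd_step_root : ∀ a d, (step a d).2 (root (step a d).1) = d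
  step_snd_step : ∀ a d d', step a ((step a d).2 d') =
    ⟨(step (step a d).1 d').1, (step a d).2 ∘ (step (step a d).1 d').2⟩

theorem natTrans_app_mk {F : Type u ⥤ Type u} (η : P.toFunctor ⟶ F) {X : Type u} (a : P.A)
    (k : P.B a → X) : η.app X ⟨a, k⟩ = F.map (TypeCat.ofHom k) (η.app (P.B a) ⟨a, id⟩) :=
  ConcreteCategory.congr_hom (η.naturality (TypeCat.ofHom k)) (⟨a, id⟩ : P.Obj (P.B a))

section Comonad

variable (ε : P.toFunctor ⟶ 𝟭 (Type u)) (δ : P.toFunctor ⟶ P.toFunctor ⋙ P.toFunctor)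

theorem counit_app_mk {X : Type u} (a : P.A) (k : P.B a → X) :
    ε.app X ⟨a, k⟩ = k (ε.app (P.B a) ⟨a, id⟩) :=
  natTrans_app_mk ε a k

theorem exists_comul_app_mk
    (counit_right : ∀ X : Type u, δ.app X ≫ P.toFunctor.map (ε.app X) = 𝟙 (P.toFunctor.obj X)) :
    ∃ step : ∀ a, P.B a → P.Obj (P.B a), ∀ (X : Type u) (a : P.A) (k : P.B a → X),
      δ.app X ⟨a, k⟩ = ⟨a, fun d => P.map k (step a d)⟩ := by
  have exists_step (a : P.A) : ∃ s : P.B a → P.Obj (P.B a), δ.app (P.B a) ⟨a, id⟩ = ⟨a, s⟩ := by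
    have fst_comul : (δ.app (P.B a) ⟨a, id⟩).1 = a :=
      congrArg Sigma.fst (ConcreteCategory.congr_hom (counit_right (P.B a)) ⟨a, id⟩)
    generalize δ.app (P.B a) ⟨a, id⟩ = x at fst_comul ⊢
    obtain ⟨b, s⟩ := x
    obtain rfl : b = a := fst_comul
    exact ⟨s, rfl⟩
  choose step hstep using exists_step
  refine ⟨step, fun X a k => ?_⟩
  rw [natTrans_app_mk δ a k, hstep]
  rfl

theorem exists_directedContainer
    (counit_left : ∀ X : Type u, δ.app X ≫ ε.app (P.toFunctor.obj X) = 𝟙 (P.toFunctor.obj X))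
    (counit_right : ∀ X : Type u, δ.app X ≫ P.toFunctor.map (ε.app X) = 𝟙 (P.toFunctor.obj X))
    (coassoc : ∀ X : Type u,
      δ.app X ≫ δ.app (P.toFunctor.obj X) = δ.app X ≫ P.toFunctor.map (δ.app X)) :
    ∃ D : P.DirectedContainer,
      (∀ (X : Type u) (a : P.A) (k : P.B a → X), ε.app X ⟨a, k⟩ = k (D.root a)) ∧
      (∀ (X : Type u) (a : P.A) (k : P.B a → X),
        δ.app X ⟨a, k⟩ = ⟨a, fun d => P.map k (D.step a d)⟩) := by
  obtain ⟨step, hδ⟩ := exists_comul_app_mk ε δ counit_right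
  let root (a : P.A) : P.B a := ε.app (P.B a) ⟨a, id⟩
  have comul_generic (a : P.A) : δ.app (P.B a) ⟨a, id⟩ = ⟨a, step a⟩ := hδ _ a id
  have step_root (a : P.A) : step a (root a) = ⟨a, id⟩ := by
    have h : ε.app _ (δ.app (P.B a) ⟨a, id⟩) = ⟨a, id⟩ :=
      ConcreteCategory.congr_hom (counit_left (P.B a)) ⟨a, id⟩
    rw [comul_generic] at h
    exact (counit_app_mk ε a (step a)).symm.trans h
  have snd_step_root (a : P.A) (d : P.B a) : (step a d).2 (root (step a d).1) = d := by
    have h : P.map (ε.app (P.B a)) (δ.app (P.B a) ⟨a, id⟩) = ⟨a, id⟩ :=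
      ConcreteCategory.congr_hom (counit_right (P.B a)) ⟨a, id⟩
    rw [comul_generic] at h
    exact (counit_app_mk ε _ _).symm.trans (congrFun (sigma_mk_injective h) d)
  have step_snd_step (a : P.A) (d : P.B a) (d' : P.B (step a d).1) : step a ((step a d).2 d') =
      ⟨(step (step a d).1 d').1, (step a d).2 ∘ (step (step a d).1 d').2⟩ := by
    have h : δ.app _ (δ.app (P.B a) ⟨a, id⟩) = P.map (δ.app (P.B a)) (δ.app (P.B a) ⟨a, id⟩) :=
      ConcreteCategory.congr_hom (coassoc (P.B a)) ⟨a, id⟩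
    rw [comul_generic] at h
    have h' := (congrFun (sigma_mk_injective ((hδ _ a (step a)).symm.trans h)) d).trans
      (hδ _ (step a d).1 (step a d).2)
    exact congrFun (sigma_mk_injective h') d'
  exact ⟨⟨step, root, step_root, snd_step_root, step_snd_step⟩, fun _ => counit_app_mk ε, hδ⟩

end Comonad

namespace DirectedContainer

variable (D : P.DirectedContainer)

def Hom (a b : P.A) : Type u := {d : P.B a // (D.step a d).1 = b}

def id (a : P.A) : D.Hom a a := ⟨D.root a, congrArg Sigma.fst (D.step_root a)⟩

def comp {a b c : P.A} (f : D.Hom a b) (g : D.Hom b c) : D.Hom a c :=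
  match b, c, f, g with
  | _, _, ⟨d, rfl⟩, ⟨d', rfl⟩ => ⟨(D.step a d).2 d', by rw [D.step_snd_step]⟩

def homEquiv (a : P.A) : P.B a ≃ Σ b, D.Hom a b :=
  (Equiv.sigmaFiberEquiv fun d => (D.step a d).1).symm

theorem coe_comp_of_step_eq {a b c : P.A} (f : D.Hom a b) (g : D.Hom b c)
    {s : P.B b → P.B a} (hs : D.step a f.1 = ⟨b, s⟩) : (D.comp f g).1 = s g.1 := by
  obtain ⟨d, rfl⟩ := f
  obtain ⟨d', rfl⟩ := g
  exact congrFun (sigma_mk_injective hs) d'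

theorem id_comp {a b : P.A} (f : D.Hom a b) : D.comp (D.id a) f = f :=
  Subtype.ext (D.coe_comp_of_step_eq (D.id a) f (D.step_root a) :)

theorem comp_id {a b : P.A} (f : D.Hom a b) : D.comp f (D.id b) = f := by
  obtain ⟨d, rfl⟩ := f
  exact Subtype.ext ((D.coe_comp_of_step_eq _ _ rfl).trans (D.snd_step_root a d))

theorem comp_assoc {a b c e : P.A} (f : D.Hom a b) (g : D.Hom b c) (h : D.Hom c e) :
    D.comp (D.comp f g) h = D.comp f (D.comp g h) := by
  obtain ⟨d, rfl⟩ := f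
  obtain ⟨d', rfl⟩ := g
  obtain ⟨d'', rfl⟩ := h
  exact Subtype.ext <|
    (D.coe_comp_of_step_eq (D.comp ⟨d, rfl⟩ ⟨d', rfl⟩) ⟨d'', rfl⟩ (D.step_snd_step a d d')).trans
      (D.coe_comp_of_step_eq ⟨d, rfl⟩ (D.comp ⟨d', rfl⟩ ⟨d'', rfl⟩) rfl).symm

end DirectedContainer

end PFunctor


/-- Ahman–Uustalu, one direction: every polynomial comonad is a category.
Given a comonad structure (`ε`, `δ`, counit laws, coassociativity) on the associated functor
of a polynomial `P`, there is a category structure (`Hom`, identities `ids`, composition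
`comp`, with unitality and associativity) on the positions `P.A`, together with bijections
`φ a : P.B a ≃ Σ b, Hom a b`, such that `ε` and `δ` are given by the stated formulas. -/
theorem stmt_16 (P : PFunctor.{u})
    (ε : P.toFunctor ⟶ 𝟭 (Type u))
    (δ : P.toFunctor ⟶ P.toFunctor ⋙ P.toFunctor)
    (counit_left : ∀ X : Type u, δ.app X ≫ ε.app (P.toFunctor.obj X) = 𝟙 (P.toFunctor.obj X))
    (counit_right : ∀ X : Type u, δ.app X ≫ P.toFunctor.map (ε.app X) = 𝟙 (P.toFunctor.obj X))
    (coassoc : ∀ X : Type u,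
      δ.app X ≫ δ.app (P.toFunctor.obj X) = δ.app X ≫ P.toFunctor.map (δ.app X)) :
    ∃ (Hom : P.A → P.A → Type u)
      (ids : ∀ a : P.A, Hom a a)
      (comp : ∀ {a b c : P.A}, Hom a b → Hom b c → Hom a c)
      (φ : ∀ a : P.A, P.B a ≃ Σ b : P.A, Hom a b),
      (∀ (a b : P.A) (f : Hom a b), comp (ids a) f = f) ∧
      (∀ (a b : P.A) (f : Hom a b), comp f (ids b) = f) ∧
      (∀ (a b c d : P.A) (f : Hom a b) (g : Hom b c) (h : Hom c d),
        comp (comp f g) h = comp f (comp g h)) ∧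
      (∀ (X : Type u) (a : P.A) (k : P.B a → X),
        ε.app X (⟨a, k⟩ : P.Obj X) = k ((φ a).symm ⟨a, ids a⟩)) ∧
      (∀ (X : Type u) (a : P.A) (k : P.B a → X),
        δ.app X (⟨a, k⟩ : P.Obj X) =
          (⟨a, fun d => ⟨(φ a d).1, fun d' =>
            k ((φ a).symm ⟨(φ (φ a d).1 d').1, comp (φ a d).2 (φ (φ a d).1 d').2⟩)⟩⟩ : P.Obj (P.Obj X))) := by
  obtain ⟨D, hε, hδ⟩ := PFunctor.exists_directedContainer ε δ counit_left counit_right coassoc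
  refine ⟨D.Hom, D.id, D.comp, D.homEquiv, fun _ _ => D.id_comp, fun _ _ => D.comp_id,
    fun _ _ _ _ => D.comp_assoc, hε, fun X a k => ?_⟩
  rw [hδ]
  rfl
end

section
/- The category of bimorphic lenses is equivalent to the full subcategory of polynomial functors spanned by monomials: the category whose objects are pairs of types (A, B) and whose morphisms (A, B) → (A', B') are pairs of functions (v : A → A', u : A × B' → B), with identity (id, (a, b) ↦ b) and composite of (v₁, u₁) : (A,B) → (A',B') and (v₂, u₂) : (A',B') → (A'',B'') given by (v₂ ∘ v₁, (a, b'') ↦ u₁ (a, u₂ (v₁ a, b''))), is equivalent to the category whose objects are pairs of types (A, B), whose morphisms (A, B) → (A', B') are the natural transformations from the functor X ↦ A × (B → X) to the functor X ↦ A' × (B' → X), with the usual identity and vertical composition of natural transformations; the equivalence is the identity on objects and sends (v, u) to the natural transformation X ↦ ((a, k) ↦ (v a, fun b' ↦ k (u (a, b')))). -/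
open CategoryTheory

universe u

/-- The category of bimorphic lenses: objects are pairs of types `(A, B)`, morphisms
`(A, B) → (A', B')` are pairs `(v : A → A', u : A × B' → B)`. -/
def LensCat : Type (u + 1) := Type u × Type u

instance : Category.{u} LensCat.{u} where
  Hom P Q := (P.1 → Q.1) × (P.1 × Q.2 → P.2)
  id P := (id, fun ab => ab.2)
  comp f g := (g.1 ∘ f.1, fun ab'' => f.2 (ab''.1, g.2 (f.1 ab''.1, ab''.2)))
  id_comp := by intros; rfl
  comp_id := by intros; rfl
  assoc := by intros; rfl

/-- The associated functor `X ↦ A × (B → X)` of the monomial `Ay^B` (position type `A`, direction type `B`). -/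
def monFun (A B : Type u) : Type u ⥤ Type u where
  obj X := A × (B → X)
  map f := TypeCat.ofHom (fun x => (x.1, f ∘ x.2))
  map_id := by intro X; ext x <;> rfl
  map_comp := by intros; rfl

/-- The full subcategory of polynomial functors spanned by monomials: objects are pairs of
types `(A, B)`, morphisms `(A, B) → (A', B')` are natural transformations
`(X ↦ A × (B → X)) ⟶ (X ↦ A' × (B' → X))`. -/
def Monomials : Type (u + 1) :=
  InducedCategory (Type u ⥤ Type u) (fun P : Type u × Type u => monFun P.1 P.2)

instance : Category.{u + 1} Monomials.{u} :=
  inferInstanceAs (Category (InducedCategory (Type u ⥤ Type u) (fun P : Type u × Type u => monFun P.1 P.2)))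

/-- The identity-on-objects functor sending a lens `(v, u)` to the natural transformation
`X ↦ ((a, k) ↦ (v a, fun b' ↦ k (u (a, b'))))`. -/
def lensToMon : LensCat.{u} ⥤ Monomials.{u} where
  obj P := (show Type u × Type u from P : Monomials.{u})
  map {P Q} φ :=
    InducedCategory.homMk
    { app := fun X => TypeCat.ofHom (fun x => (φ.1 x.1, fun b' => x.2 (φ.2 (x.1, b'))))
      naturality := by intros; rfl }
  map_id := by intros; rfl
  map_comp := by intros; rfl

/-
Lenses are the Yoneda-style description of natural transformations between monomials: by
naturality, `η : A × (B → -) ⟶ A' × (B' → -)` is determined by the generic element `(a, id)` at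
`X = B`, and `η.app B (a, id) = (v a, fun b' ↦ u (a, b'))` reads off the lens `(v, u)`.
-/

theorem monFun_natTrans_app {A B : Type u} {F : Type u ⥤ Type u} (η : monFun A B ⟶ F)
    {X : Type u} (a : A) (k : B → X) :
    η.app X (a, k) = F.map (TypeCat.ofHom k) (η.app B (a, id)) :=
  NatTrans.naturality_apply η (TypeCat.ofHom k) ((a, id) : A × (B → B))

namespace lensToMon

def preimage {P Q : LensCat.{u}} (η : lensToMon.obj P ⟶ lensToMon.obj Q) : P ⟶ Q :=
  (fun a => (η.hom.app P.2 (a, id)).1, fun ab' => (η.hom.app P.2 (ab'.1, id)).2 ab'.2)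

theorem map_preimage {P Q : LensCat.{u}} (η : lensToMon.obj P ⟶ lensToMon.obj Q) :
    lensToMon.map (preimage η) = η := by
  apply InducedCategory.hom_ext
  ext X ⟨a, k⟩
  exact (monFun_natTrans_app η.hom a k).symm

def fullyFaithful : lensToMon.{u}.FullyFaithful where
  preimage := preimage
  map_preimage := map_preimage
  preimage_map _ := rfl

end lensToMon

/-- the category of bimorphic lenses is equivalent to the full subcategory of
polynomial functors spanned by the monomials, via the identity-on-objects functor above. -/
theorem stmt_18 : lensToMon.{u}.IsEquivalence :=
  { faithful := lensToMon.fullyFaithful.faithful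
    full := lensToMon.fullyFaithful.full
    essSurj := ⟨fun P => ⟨P, ⟨Iso.refl _⟩⟩⟩ }
end
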